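/- arXiv:2210.05080 — 3 statements merged into one kernel-verified Lean document; each statement's English description precedes it below -/
import Mathlib

section
/- If D1 and D2 are disjoint digraphs with dc(D1) ≥ k and dc(D2) ≥ k, then the directed Hajós join D = (D1,u1,v1) ▽ (D2,v2,u2) satisfies dc(D) ≥ k. -/
/-- A directed cycle (length ≥ 2, distinct vertices) of the digraph with arc relation `A`,
all of whose vertices lie in the set `S`. -/
def HasDicycleIn {V : Type*} (A : V → V → Prop) (S : Set V) : Prop :=
  ∃ n : ℕ, 2 ≤ n ∧ ∃ f : ZMod n → V, Function.Injective f ∧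
    (∀ i, f i ∈ S) ∧ (∀ i, A (f i) (f (i + 1)))

/-- An acyclic coloring: no color class contains a directed cycle. -/
def IsAcyclicColoring {V : Type*} (A : V → V → Prop) {k : ℕ} (c : V → Fin k) : Prop :=
  ∀ i : Fin k, ¬ HasDicycleIn A {v | c v = i}

/-- The dichromatic number of a digraph, given by its arc relation. -/
noncomputable def dichromatic {V : Type*} (A : V → V → Prop) : ℕ :=
  sInf {k | ∃ c : V → Fin k, IsAcyclicColoring A c}

/-- Vertex set of the directed Hajós join: disjoint union with `v2` removed
(`v2` is identified with `v1`, represented by `Sum.inl v1`). -/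
def HajosVerts (V1 V2 : Type*) (v2 : V2) := {x : V1 ⊕ V2 // x ≠ Sum.inr v2}

/-- Arc relation of the directed Hajós join `(D1,u1,v1) ▽ (D2,v2,u2)`:
delete the arcs `u1v1` and `v2u2`, identify `v1` with `v2`, add the arc `u1u2`. -/
def hajosJoin {V1 V2 : Type*} (A1 : V1 → V1 → Prop) (A2 : V2 → V2 → Prop)
    (u1 v1 : V1) (v2 u2 : V2) (x y : HajosVerts V1 V2 v2) : Prop :=
  (∃ a b : V1, x.1 = Sum.inl a ∧ y.1 = Sum.inl b ∧ A1 a b ∧ ¬(a = u1 ∧ b = v1)) ∨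
  (∃ a b : V2, x.1 = Sum.inr a ∧ y.1 = Sum.inr b ∧ A2 a b) ∨
  (∃ b : V2, x.1 = Sum.inl v1 ∧ y.1 = Sum.inr b ∧ A2 v2 b ∧ b ≠ u2) ∨
  (∃ a : V2, x.1 = Sum.inr a ∧ y.1 = Sum.inl v1 ∧ A2 a v2) ∨
  (x.1 = Sum.inl u1 ∧ y.1 = Sum.inr u2)

/-- Arc relation of the digraph obtained from `A` by identifying the set `I`
into a single new vertex (represented by `none`). -/
def identifyAdj {V : Type*} (A : V → V → Prop) (I : Set V) :
    Option {x : V // x ∉ I} → Option {x : V // x ∉ I} → Prop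
  | some a, some b => A a.1 b.1
  | none, some b => ∃ u ∈ I, A u b.1
  | some a, none => ∃ u ∈ I, A a.1 u
  | none, none => False

/-!
Restrict an acyclic colouring of the Hajós join to `D1` (through `left`) and to `D2` (through
`right`, which sends `v2` to the identified vertex). A monochromatic dicycle of either
restriction that avoids the deleted arc (`u1v1` resp. `v2u2`) survives in the join, so if both
restrictions failed, deleting those arcs would leave a `v1`–`u1` dipath in `D1` and a `u2`–`v2`
dipath in `D2`. Both contain the vertex `v1 = v2`, so they have the same colour, and together with
the new arc `u1u2` they close up into a monochromatic dicycle of the join. Hence one restriction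
is an acyclic colouring with the same number of colours.
-/

open List

theorem List.IsChain.and {α : Type*} {R R' : α → α → Prop} {l : List α} (h : l.IsChain R)
    (h' : l.IsChain R') : l.IsChain fun a b => R a b ∧ R' a b := by
  rw [isChain_iff_forall_rel_of_append_cons_cons] at *
  exact fun _ _ _ _ hl => ⟨h hl, h' hl⟩

section Dicycle

variable {V W : Type*} {A : V → V → Prop} {S : Set V}

theorem hasDicycleIn_iff_fin : HasDicycleIn A S ↔
    ∃ m, ∃ f : Fin (m + 2) → V, f.Injective ∧ (∀ i, f i ∈ S) ∧ ∀ i, A (f i) (f (i + 1)) := by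
  -- `ZMod (m + 2)` unfolds to `Fin (m + 2)`, ring structure included.
  constructor
  · rintro ⟨n, hn, f, hf⟩
    obtain ⟨m, rfl⟩ := Nat.exists_eq_add_of_le' hn
    exact ⟨m, f, hf⟩
  · rintro ⟨m, f, hf⟩
    exact ⟨m + 2, by omega, f, hf⟩

def IsDipathIn (A : V → V → Prop) (S : Set V) (l : List V) : Prop :=
  l.Nodup ∧ l.IsChain A ∧ ∀ x ∈ l, x ∈ S

def deleteArc (A : V → V → Prop) (u v : V) (a b : V) : Prop :=
  A a b ∧ ¬(a = u ∧ b = v)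

theorem HasDicycleIn.map {B : W → W → Prop} {T : Set W} {φ : V → W} (hφ : φ.Injective)
    (hA : ∀ a b, a ≠ b → A a b → B (φ a) (φ b)) (hS : Set.MapsTo φ S T)
    (h : HasDicycleIn A S) : HasDicycleIn B T := by
  obtain ⟨m, f, hf, hfS, hfA⟩ := hasDicycleIn_iff_fin.1 h
  exact hasDicycleIn_iff_fin.2 ⟨m, φ ∘ f, hφ.comp hf, fun i => hS (hfS i),
    fun i => hA _ _ (hf.ne (by simp)) (hfA i)⟩

theorem IsDipathIn.map {B : W → W → Prop} {T : Set W} {φ : V → W} (hφ : φ.Injective)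
    (hA : ∀ a b, a ≠ b → A a b → B (φ a) (φ b)) (hS : Set.MapsTo φ S T) {l : List V}
    (h : IsDipathIn A S l) : IsDipathIn B T (l.map φ) := by
  obtain ⟨hnd, hch, hlS⟩ := h
  refine ⟨hnd.map hφ, ?_, by simpa using fun x hx => hS (hlS x hx)⟩
  rw [isChain_map]
  exact (hnd.isChain.and hch).imp fun a b hab => hA a b hab.1 hab.2

theorem IsDipathIn.append {l₁ l₂ : List V} {y : V} (h₁ : IsDipathIn A S (l₁ ++ [y]))
    (h₂ : IsDipathIn A S (y :: l₂)) (hd : l₁.Disjoint l₂) : IsDipathIn A S (l₁ ++ y :: l₂) := by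
  obtain ⟨hnd₁, hch₁, hS₁⟩ := h₁
  obtain ⟨hnd₂, hch₂, hS₂⟩ := h₂
  refine ⟨?_, by simpa using hch₁.append_overlap (l₂ := [y]) hch₂ (by simp), ?_⟩
  · rw [← singleton_append, ← append_assoc, nodup_append]
    refine ⟨hnd₁, (nodup_cons.1 hnd₂).2, ?_⟩
    simp only [mem_append, mem_singleton]
    rintro a (ha | rfl) b hb rfl
    exacts [hd ha hb, (nodup_cons.1 hnd₂).1 hb]
  · simp only [mem_append, mem_cons] at hS₁ hS₂ ⊢
    grind

theorem IsDipathIn.hasDicycleIn {x y : V} {l : List V} (h : IsDipathIn A S (x :: l ++ [y]))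
    (hyx : A y x) : HasDicycleIn A S := by
  obtain ⟨hnd, hch, hS⟩ := h
  set L := x :: l ++ [y]
  have hL : L.length = l.length + 2 := by simp [L]
  refine hasDicycleIn_iff_fin.2 ⟨l.length, fun i => L[i.val], ?_, fun i => hS _ (getElem_mem _),
    fun i => ?_⟩
  · intro i j hij
    have := nodup_iff_injective_getElem.1 hnd (a₁ := ⟨i, by omega⟩) (a₂ := ⟨j, by omega⟩) hij
    exact Fin.ext (by simpa using this)
  · rcases eq_or_ne i (Fin.last _) with rfl | hi
    · simpa [L, Fin.last_add_one] using hyx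
    · have hi' : ((i + 1 : Fin _) : ℕ) = i + 1 :=
        Fin.val_add_one_of_lt (Fin.lt_last_iff_ne_last.2 hi)
      simp only [hi']
      exact isChain_iff_getElem.1 hch i (by have := Fin.val_lt_last hi; omega)

theorem IsDipathIn.deleteArc_of_head {u v : V} {l : List V} (h : IsDipathIn A S (v :: l)) :
    IsDipathIn (deleteArc A u v) S (v :: l) := by
  obtain ⟨hnd, hch, hS⟩ := h
  exact ⟨hnd, hch.imp_of_mem_tail_imp fun a b _ hb hab =>
    ⟨hab, fun h => (nodup_cons.1 hnd).1 (h.2 ▸ hb)⟩, hS⟩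

theorem HasDicycleIn.deleteArc_or_isDipathIn (u v : V) (h : HasDicycleIn A S) :
    HasDicycleIn (deleteArc A u v) S ∨ ∃ l, IsDipathIn (deleteArc A u v) S (v :: l ++ [u]) := by
  refine or_iff_not_imp_left.2 fun hdel => ?_
  obtain ⟨m, f, hf, hfS, hfA⟩ := hasDicycleIn_iff_fin.1 h
  obtain ⟨j, rfl, rfl⟩ : ∃ j, f j = u ∧ f (j + 1) = v := by
    by_contra! hno
    exact hdel (hasDicycleIn_iff_fin.2 ⟨m, f, hf, hfS, fun i => ⟨hfA i, fun h => hno i h.1 h.2⟩⟩)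
  set g : Fin (m + 2) → V := fun i => f (j + 1 + i)
  have hg : ofFn g = f (j + 1) :: ofFn (fun i : Fin m => g i.castSucc.succ) ++ [f j] := by
    rw [ofFn_succ, ofFn_succ']
    simp [g, add_assoc, add_comm 1 (Fin.last _), Fin.last_add_one]
  have hP : IsDipathIn A S (ofFn g) := by
    refine ⟨nodup_ofFn.2 (hf.comp (add_right_injective _)), isChain_ofFn.2 fun i hi => ?_,
      forall_mem_ofFn_iff.2 fun i => hfS _⟩
    convert hfA (j + 1 + ⟨i, by omega⟩) using 2
    simp only [add_assoc]
    congr 2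
    ext
    rw [Fin.val_add_one_of_lt' (by simpa using hi)]
  rw [hg] at hP
  exact ⟨_, hP.deleteArc_of_head⟩

end Dicycle

section Dichromatic

variable {V : Type*} {A : V → V → Prop}

theorem IsAcyclicColoring.of_injective {k : ℕ} {c : V → Fin k} (hc : c.Injective) :
    IsAcyclicColoring A c := by
  rintro i ⟨n, hn, f, hf, hfS, -⟩
  have : Fact (1 < n) := ⟨hn⟩
  exact zero_ne_one (hf (hc ((hfS 0).trans (hfS 1).symm)))

theorem dichromatic_le {k : ℕ} {c : V → Fin k} (hc : IsAcyclicColoring A c) :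
    dichromatic A ≤ k :=
  Nat.sInf_le ⟨c, hc⟩

-- Without finiteness there may be no colouring at all, and then `dichromatic A = sInf ∅ = 0`.
theorem le_dichromatic [Finite V] {k : ℕ}
    (h : ∀ m (c : V → Fin m), IsAcyclicColoring A c → k ≤ m) : k ≤ dichromatic A :=
  le_csInf ⟨_, Finite.equivFin V, .of_injective (Finite.equivFin V).injective⟩
    fun _ ⟨c, hc⟩ => h _ c hc

end Dichromatic

namespace HajosVerts

variable {V1 V2 : Type*}

def left (v2 : V2) (a : V1) : HajosVerts V1 V2 v2 :=
  ⟨Sum.inl a, Sum.inl_ne_inr⟩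

open Classical in
noncomputable def right (v1 : V1) (v2 b : V2) : HajosVerts V1 V2 v2 :=
  if h : b = v2 then left v2 v1 else ⟨Sum.inr b, by simpa using h⟩

variable {v1 : V1} {v2 : V2}

@[simp]
theorem val_left (a : V1) : (left v2 a).1 = Sum.inl a := rfl

@[simp]
theorem right_self : right v1 v2 v2 = left v2 v1 := dif_pos rfl

theorem val_right_of_ne {b : V2} (hb : b ≠ v2) : (right v1 v2 b).1 = Sum.inr b := by
  simp [right, hb]

theorem left_injective : (left (V1 := V1) v2).Injective := fun a b h => by
  simpa using congrArg Subtype.val h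

theorem right_ne_left {b : V2} (hb : b ≠ v2) (a : V1) : right v1 v2 b ≠ left v2 a := by
  intro h
  simpa [val_right_of_ne hb] using congrArg Subtype.val h

theorem right_injective : (right v1 v2).Injective := by
  intro a b h
  by_cases ha : a = v2 <;> by_cases hb : b = v2
  · exact ha.trans hb.symm
  · subst ha
    exact absurd (h.symm.trans right_self) (right_ne_left hb v1)
  · subst hb
    exact absurd (h.trans right_self) (right_ne_left ha v1)
  · simpa [val_right_of_ne ha, val_right_of_ne hb] using congrArg Subtype.val h

end HajosVerts

open HajosVerts

section HajosJoin

variable {V1 V2 : Type*} {A1 : V1 → V1 → Prop} {A2 : V2 → V2 → Prop} {u1 v1 : V1} {v2 u2 : V2}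

theorem hajosJoin_left {a b : V1} (h : deleteArc A1 u1 v1 a b) :
    hajosJoin A1 A2 u1 v1 v2 u2 (left v2 a) (left v2 b) :=
  Or.inl ⟨a, b, rfl, rfl, h⟩

theorem hajosJoin_right {a b : V2} (hab : a ≠ b) (h : deleteArc A2 v2 u2 a b) :
    hajosJoin A1 A2 u1 v1 v2 u2 (right v1 v2 a) (right v1 v2 b) := by
  obtain ⟨hA, hne⟩ := h
  by_cases ha : a = v2 <;> by_cases hb : b = v2
  · exact absurd (ha.trans hb.symm) hab
  · subst ha
    exact Or.inr (Or.inr (Or.inl ⟨b, by simp, val_right_of_ne hb, hA, fun h => hne ⟨rfl, h⟩⟩))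
  · subst hb
    exact Or.inr (Or.inr (Or.inr (Or.inl ⟨a, val_right_of_ne ha, by simp, hA⟩)))
  · exact Or.inr (Or.inl ⟨a, b, val_right_of_ne ha, val_right_of_ne hb, hA⟩)

theorem hajosJoin_left_right (hu2 : u2 ≠ v2) :
    hajosJoin A1 A2 u1 v1 v2 u2 (left v2 u1) (right v1 v2 u2) :=
  Or.inr (Or.inr (Or.inr (Or.inr ⟨rfl, val_right_of_ne hu2⟩)))

theorem hasDicycleIn_hajosJoin {S : Set (HajosVerts V1 V2 v2)} {l1 : List V1} {l2 : List V2}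
    (hP1 : IsDipathIn (deleteArc A1 u1 v1) (left v2 ⁻¹' S) (v1 :: l1 ++ [u1]))
    (hP2 : IsDipathIn (deleteArc A2 v2 u2) (right v1 v2 ⁻¹' S) (u2 :: l2 ++ [v2])) :
    HasDicycleIn (hajosJoin A1 A2 u1 v1 v2 u2) S := by
  have hv2 : v2 ∉ u2 :: l2 := fun h =>
    (nodup_append.1 hP2.1).2.2 _ h _ (mem_singleton_self _) rfl
  have h1 : IsDipathIn (hajosJoin A1 A2 u1 v1 v2 u2) S _ :=
    hP1.map left_injective (fun _ _ _ => hajosJoin_left) (Set.mapsTo_preimage _ _)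
  have h2 : IsDipathIn (hajosJoin A1 A2 u1 v1 v2 u2) S _ :=
    hP2.map right_injective (fun _ _ => hajosJoin_right) (Set.mapsTo_preimage _ _)
  simp only [map_cons, map_append, map_nil, right_self] at h1 h2
  have hd : (right v1 v2 u2 :: l2.map (right v1 v2)).Disjoint
      (l1.map (left v2) ++ [left v2 u1]) := by
    intro x hx hx'
    obtain ⟨b, hb, rfl⟩ : ∃ b ∈ u2 :: l2, right v1 v2 b = x := by simpa [eq_comm] using hx
    obtain ⟨a, -, ha⟩ : ∃ a ∈ l1 ++ [u1], left v2 a = right v1 v2 b := by simpa [eq_comm] using hx'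
    exact right_ne_left (ne_of_mem_of_not_mem hb hv2) a ha.symm
  have h : IsDipathIn (hajosJoin A1 A2 u1 v1 v2 u2) S
      (right v1 v2 u2 :: (l2.map (right v1 v2) ++ left v2 v1 :: l1.map (left v2)) ++
        [left v2 u1]) := by
    simpa using h2.append h1 hd
  exact h.hasDicycleIn (hajosJoin_left_right fun h => hv2 (h ▸ mem_cons_self))

theorem IsAcyclicColoring.comp_left_or_comp_right {m : ℕ} {c : HajosVerts V1 V2 v2 → Fin m}
    (hc : IsAcyclicColoring (hajosJoin A1 A2 u1 v1 v2 u2) c) :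
    IsAcyclicColoring A1 (c ∘ left v2) ∨ IsAcyclicColoring A2 (c ∘ right v1 v2) := by
  by_contra! h
  simp only [IsAcyclicColoring, not_forall, not_not] at h
  obtain ⟨⟨i, hi⟩, ⟨i', hi'⟩⟩ := h
  rcases hi.deleteArc_or_isDipathIn u1 v1 with hi | ⟨l1, hP1⟩
  · exact hc i (hi.map left_injective (fun _ _ _ => hajosJoin_left) fun _ hx => hx)
  rcases hi'.deleteArc_or_isDipathIn v2 u2 with hi' | ⟨l2, hP2⟩
  · exact hc i' (hi'.map right_injective (fun _ _ => hajosJoin_right) fun _ hx => hx)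
  have hii' : i = i' := by
    have h1 : c (left v2 v1) = i := hP1.2.2 v1 (by simp)
    have h2 : c (right v1 v2 v2) = i' := hP2.2.2 v2 (by simp)
    rw [← h1, ← h2, right_self]
  subst hii'
  exact hc i (hasDicycleIn_hajosJoin hP1 hP2)

end HajosJoin

theorem le_dichromatic_hajosJoin_general {V1 V2 : Type*} [Fintype V1] [Fintype V2]
    (A1 : V1 → V1 → Prop) (A2 : V2 → V2 → Prop)
    (u1 v1 : V1) (v2 u2 : V2) (k : ℕ)
    (hk1 : k ≤ dichromatic A1) (hk2 : k ≤ dichromatic A2) :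
    k ≤ dichromatic (hajosJoin A1 A2 u1 v1 v2 u2) := by
  have : Finite (HajosVerts V1 V2 v2) := Subtype.finite
  refine le_dichromatic fun m c hc => ?_
  rcases hc.comp_left_or_comp_right with h | h
  · exact hk1.trans (dichromatic_le h)
  · exact hk2.trans (dichromatic_le h)

/-- If `dc(D1) ≥ k` and `dc(D2) ≥ k`, then the directed Hajós join
`(D1,u1,v1) ▽ (D2,v2,u2)` satisfies `dc ≥ k`. -/
theorem le_dichromatic_hajosJoin {V1 V2 : Type*} [Fintype V1] [Fintype V2]
    (A1 : V1 → V1 → Prop) (A2 : V2 → V2 → Prop)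
    (u1 v1 : V1) (v2 u2 : V2) (h1 : A1 u1 v1) (h2 : A2 v2 u2) (k : ℕ)
    (hk1 : k ≤ dichromatic A1) (hk2 : k ≤ dichromatic A2) :
    k ≤ dichromatic (hajosJoin A1 A2 u1 v1 v2 u2) :=
  le_dichromatic_hajosJoin_general A1 A2 u1 v1 v2 u2 k hk1 hk2
end

section
/- Every Hajós-k-constructible digraph has dichromatic number at least k. -/
/-- The class of Hajós-`k`-constructible digraphs (on vertex sets `Fin n`):
the smallest family containing the complete symmetric digraph `D(K_k)` and closed
(up to isomorphism) under the directed Hajós join and identification of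
independent sets of vertices. -/
inductive HajosConstructible (k : ℕ) : (n : ℕ) → (Fin n → Fin n → Prop) → Prop
  | base : HajosConstructible k k (fun u v => u ≠ v)
  | join {n1 n2 m : ℕ} {A1 : Fin n1 → Fin n1 → Prop} {A2 : Fin n2 → Fin n2 → Prop}
      {u1 v1 : Fin n1} {v2 u2 : Fin n2} {B : Fin m → Fin m → Prop}
      (h1 : HajosConstructible k n1 A1) (h2 : HajosConstructible k n2 A2)
      (ha1 : A1 u1 v1) (ha2 : A2 v2 u2)
      (e : HajosVerts (Fin n1) (Fin n2) v2 ≃ Fin m)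
      (he : ∀ x y, hajosJoin A1 A2 u1 v1 v2 u2 x y ↔ B (e x) (e y)) :
      HajosConstructible k m B
  | ident {n m : ℕ} {A : Fin n → Fin n → Prop} {I : Set (Fin n)}
      {B : Fin m → Fin m → Prop}
      (h : HajosConstructible k n A) (hne : I.Nonempty)
      (hind : ∀ u ∈ I, ∀ v ∈ I, u ≠ v → ¬ A u v)
      (e : Option {x : Fin n // x ∉ I} ≃ Fin m)
      (he : ∀ x y, identifyAdj A I x y ↔ B (e x) (e y)) :
      HajosConstructible k m B

/-! An acyclic `j`-colouring of a Hajós-`k`-constructible digraph induces one of a digraph from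
an earlier stage of the construction, so `k ≤ j` by induction; in `D(K_k)` two vertices of the
same colour form a 2-cycle. Identifying an independent set sends every dicycle to a closed walk
without loops, so the pulled-back colouring stays acyclic. For a Hajós join, monochromatic
dicycles in both parts would have to pass through the deleted arcs `u1v1` and `v2u2`; their
colours agree at `v1 = v2`, and the paths `v1 ⇝ u1` and `u2 ⇝ v2` close up through `u1u2` into
a monochromatic closed walk of the join. Dicycles are handled as closed walks throughout, since a
shortest closed walk is a dicycle. -/

open Relation

section ClosedWalk

variable {V : Type*} {R : V → V → Prop}

/-- A closed walk of length `n`, read off `p 0, p 1, …, p n = p 0`. -/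
def IsClosedWalk (R : V → V → Prop) (n : ℕ) (p : ℕ → V) : Prop :=
  0 < n ∧ p n = p 0 ∧ ∀ i < n, R (p i) (p (i + 1))

theorem exists_walk_of_transGen {a b : V} (h : TransGen R a b) :
    ∃ n, 0 < n ∧ ∃ p : ℕ → V, p 0 = a ∧ p n = b ∧ ∀ i < n, R (p i) (p (i + 1)) := by
  induction h with
  | @single b hab =>
    refine ⟨1, one_pos, fun i => if i = 0 then a else b, by simp, by simp, fun i hi => ?_⟩
    obtain rfl : i = 0 := by omega
    simpa using hab
  | @tail b c _ hbc ih =>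
    obtain ⟨n, hn, p, hp0, hpn, hp⟩ := ih
    refine ⟨n + 1, n.succ_pos, fun i => if i ≤ n then p i else c, by simpa using hp0,
      by simp, fun i hi => ?_⟩
    rcases Nat.lt_or_ge i n with hin | hin
    · simpa [hin.le, Nat.succ_le_of_lt hin] using hp i hin
    · obtain rfl : i = n := by omega
      simpa [hpn] using hbc

theorem exists_isClosedWalk_of_transGen {x : V} (h : TransGen R x x) :
    ∃ n p, IsClosedWalk R n p := by
  obtain ⟨n, hn, p, hp0, hpn, hp⟩ := exists_walk_of_transGen h
  exact ⟨n, p, hn, hpn.trans hp0.symm, hp⟩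

/-- Cutting out the closed subwalk between two visits `i < j` of the same vertex. -/
theorem IsClosedWalk.shortcut {n : ℕ} {p : ℕ → V} (hp : IsClosedWalk R n p) {i j : ℕ}
    (hij : i < j) (hjn : j < n) (heq : p i = p j) :
    IsClosedWalk R (n - (j - i)) (fun t => p (if t ≤ i then t else t + (j - i))) := by
  obtain ⟨-, hclosed, harc⟩ := hp
  refine ⟨by omega, ?_, fun t ht => ?_⟩
  · simpa [show ¬ n - (j - i) ≤ i by omega, show n - (j - i) + (j - i) = n by omega]
      using hclosed
  · rcases lt_trichotomy t i with hti | rfl | hti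
    · simpa [hti.le, Nat.succ_le_of_lt hti] using harc t (by omega)
    · simpa [heq, show t + 1 + (j - t) = j + 1 by omega] using harc j hjn
    · simpa [show ¬ t ≤ i by omega, show ¬ t + 1 ≤ i by omega,
        show t + 1 + (j - i) = t + (j - i) + 1 by omega] using harc (t + (j - i)) (by omega)

theorem exists_isClosedWalk_injOn (h : ∃ n p, IsClosedWalk R n p) :
    ∃ n p, IsClosedWalk R n p ∧ Set.InjOn p (Set.Iio n) := by
  classical
  obtain ⟨p, hp⟩ := Nat.find_spec h
  refine ⟨Nat.find h, p, hp, ?_⟩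
  suffices ∀ i j, i < j → j < Nat.find h → p i ≠ p j by
    intro i (hi : i < Nat.find h) j (hj : j < Nat.find h) hij
    by_contra hne
    rcases Nat.lt_or_gt_of_ne hne with hlt | hlt
    · exact this i j hlt hj hij
    · exact this j i hlt hi hij.symm
  intro i j hij hj heq
  exact Nat.find_min h (by omega : Nat.find h - (j - i) < Nat.find h)
    ⟨_, hp.shortcut hij hj heq⟩

end ClosedWalk

section Dicycle

variable {V : Type*} {A : V → V → Prop} {S : Set V}

def arcWithin (A : V → V → Prop) (S : Set V) (a b : V) : Prop :=
  a ∈ S ∧ b ∈ S ∧ a ≠ b ∧ A a b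

theorem hasDicycleIn_of_isClosedWalk {n : ℕ} {p : ℕ → V}
    (hp : IsClosedWalk (arcWithin A S) n p) (hinj : Set.InjOn p (Set.Iio n)) :
    HasDicycleIn A S := by
  obtain ⟨hn, hclosed, harc⟩ := hp
  have hn2 : 2 ≤ n := by
    by_contra! h1
    obtain rfl : n = 1 := by omega
    exact (harc 0 one_pos).2.2.1 (by simpa using hclosed.symm)
  have : NeZero n := ⟨by omega⟩
  have hsucc : ∀ z : ZMod n, p (z + 1).val = p (z.val + 1) := by
    intro z
    rw [ZMod.val_add, ZMod.val_one_eq_one_mod, Nat.one_mod_eq_one.2 (by omega)]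
    rcases Nat.lt_or_ge (z.val + 1) n with h | h
    · rw [Nat.mod_eq_of_lt h]
    · rw [show z.val + 1 = n by have := z.val_lt; omega, Nat.mod_self, hclosed]
  refine ⟨n, hn2, fun z => p z.val, fun z w hzw => ZMod.val_injective n
    (hinj z.val_lt w.val_lt hzw), fun z => (harc _ z.val_lt).1, fun z => ?_⟩
  simpa only [hsucc] using (harc _ z.val_lt).2.2.2

theorem transGen_of_hasDicycleIn (h : HasDicycleIn A S) : ∃ x, TransGen (arcWithin A S) x x := by
  obtain ⟨n, hn, f, hinj, hS, harc⟩ := h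
  have : Fact (1 < n) := ⟨hn⟩
  have hstep : ∀ z : ZMod n, arcWithin A S (f z) (f (z + 1)) := fun z =>
    ⟨hS z, hS (z + 1), hinj.ne (by simp), harc z⟩
  have hwalk : ∀ m : ℕ, TransGen (arcWithin A S) (f 0) (f ((m + 1 : ℕ) : ZMod n)) := by
    intro m
    induction m with
    | zero => simpa using TransGen.single (hstep 0)
    | succ m ih => simpa using ih.tail (hstep _)
  refine ⟨f 0, ?_⟩
  simpa [Nat.sub_add_cancel (by omega : 1 ≤ n)] using hwalk (n - 1)

theorem hasDicycleIn_iff_transGen : HasDicycleIn A S ↔ ∃ x, TransGen (arcWithin A S) x x :=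
  ⟨transGen_of_hasDicycleIn, fun ⟨_, h⟩ =>
    let ⟨_, _, hp, hinj⟩ := exists_isClosedWalk_injOn (exists_isClosedWalk_of_transGen h)
    hasDicycleIn_of_isClosedWalk hp hinj⟩

end Dicycle

section Coloring

variable {V W : Type*} {A : V → V → Prop} {B : W → W → Prop} {j : ℕ}

theorem isAcyclicColoring_iff {c : V → Fin j} :
    IsAcyclicColoring A c ↔ ∀ i x, ¬ TransGen (arcWithin A {v | c v = i}) x x := by
  simp only [IsAcyclicColoring, hasDicycleIn_iff_transGen, not_exists]

theorem isAcyclicColoring_of_injective {c : V → Fin j} (hc : Function.Injective c) :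
    IsAcyclicColoring A c := by
  refine isAcyclicColoring_iff.2 fun i x hx => ?_
  obtain ⟨y, ⟨hx, hy, hxy, -⟩, -⟩ := TransGen.head'_iff.1 hx
  exact hxy (hc (hx.trans hy.symm))

theorem IsAcyclicColoring.comap {c : W → Fin j} (hc : IsAcyclicColoring B c) (φ : V → W)
    (hφ : ∀ a b, a ≠ b → A a b → φ a ≠ φ b ∧ B (φ a) (φ b)) :
    IsAcyclicColoring A (c ∘ φ) := by
  refine isAcyclicColoring_iff.2 fun i x hx => isAcyclicColoring_iff.1 hc i (φ x) ?_
  refine hx.lift φ fun a b ⟨ha, hb, hab, hA⟩ => ?_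
  exact ⟨ha, hb, hφ a b hab hA⟩

theorem IsAcyclicColoring.comap_equiv {c : W → Fin j} (hc : IsAcyclicColoring B c) (e : V ≃ W)
    (he : ∀ x y, A x y ↔ B (e x) (e y)) : IsAcyclicColoring A (c ∘ e) :=
  hc.comap e fun _ _ hab hA => ⟨e.injective.ne hab, (he _ _).1 hA⟩

theorem IsAcyclicColoring.injective_of_complete {c : V → Fin j}
    (hc : IsAcyclicColoring (fun u v : V => u ≠ v) c) : Function.Injective c := by
  intro u v huv
  by_contra hne
  have hu : u ∈ {x | c x = c u} := rfl
  have hv : v ∈ {x | c x = c u} := huv.symm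
  exact isAcyclicColoring_iff.1 hc (c u) u
    ((TransGen.single ⟨hu, hv, hne, hne⟩).tail ⟨hv, hu, Ne.symm hne, Ne.symm hne⟩)

end Coloring

section WithoutArc

variable {α : Type*} {R : α → α → Prop} {p q : α}

def withoutArc (R : α → α → Prop) (p q : α) (a b : α) : Prop :=
  R a b ∧ ¬(a = p ∧ b = q)

theorem Relation.ReflTransGen.withoutArc_or {a b : α} (h : ReflTransGen R a b) :
    ReflTransGen (withoutArc R p q) a b ∨
      ReflTransGen (withoutArc R p q) a p ∧ R p q ∧ ReflTransGen (withoutArc R p q) q b := by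
  induction h with
  | refl => exact Or.inl .refl
  | @tail b c _ hbc ih =>
    by_cases hpq : b = p ∧ c = q
    · obtain ⟨rfl, rfl⟩ := hpq
      rcases ih with hab | ⟨hap, -, hqb⟩
      · exact Or.inr ⟨hab, hbc, .refl⟩
      · exact Or.inr ⟨hap, hbc, .refl⟩
    · rcases ih with hab | ⟨hap, hpq', hqb⟩
      · exact Or.inl (hab.tail ⟨hbc, hpq⟩)
      · exact Or.inr ⟨hap, hpq', hqb.tail ⟨hbc, hpq⟩⟩

theorem Relation.TransGen.withoutArc_or {x : α} (h : TransGen R x x) :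
    TransGen (withoutArc R p q) x x ∨ R p q ∧ ReflTransGen (withoutArc R p q) q p := by
  obtain ⟨y, hxy, hyx⟩ := TransGen.head'_iff.1 h
  by_cases hpq : x = p ∧ y = q
  · obtain ⟨rfl, rfl⟩ := hpq
    rcases hyx.withoutArc_or (p := x) (q := y) with hyx | ⟨hyx, -, -⟩ <;>
      exact Or.inr ⟨hxy, hyx⟩
  · rcases hyx.withoutArc_or (p := p) (q := q) with hyx | ⟨hyp, hpq', hqx⟩
    · exact Or.inl (TransGen.head' ⟨hxy, hpq⟩ hyx)
    · exact Or.inr ⟨hpq', hqx.trans (ReflTransGen.head ⟨hxy, hpq⟩ hyp)⟩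

end WithoutArc

namespace HajosVerts

variable {V1 V2 : Type*}

def inl (v2 : V2) (a : V1) : HajosVerts V1 V2 v2 :=
  ⟨Sum.inl a, Sum.inl_ne_inr⟩

def inr [DecidableEq V2] (v1 : V1) (v2 b : V2) : HajosVerts V1 V2 v2 :=
  if h : b = v2 then inl v2 v1 else ⟨Sum.inr b, by simpa using h⟩

theorem inl_injective {v2 : V2} : Function.Injective (inl (V1 := V1) v2) :=
  fun _ _ h => Sum.inl_injective (congrArg Subtype.val h)

variable [DecidableEq V2] {v1 : V1} {v2 b : V2}

@[simp]
theorem inr_self : inr v1 v2 v2 = inl v2 v1 :=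
  dif_pos rfl

theorem val_inr_of_ne (h : b ≠ v2) : (inr v1 v2 b).1 = Sum.inr b := by
  simp [inr, h]

theorem inr_injective : Function.Injective (inr v1 v2) := by
  intro a b hab
  by_cases ha : a = v2 <;> by_cases hb : b = v2
  · exact ha.trans hb.symm
  · have := congrArg Subtype.val hab
    simp [ha, val_inr_of_ne hb, inl] at this
  · have := congrArg Subtype.val hab
    simp [hb, val_inr_of_ne ha, inl] at this
  · simpa [val_inr_of_ne ha, val_inr_of_ne hb] using congrArg Subtype.val hab

theorem inl_ne_inr (a : V1) (h : b ≠ v2) : inl v2 a ≠ inr v1 v2 b := by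
  intro hab
  simpa [inl, val_inr_of_ne h] using congrArg Subtype.val hab

end HajosVerts

section HajosJoin

open HajosVerts

variable {V1 V2 : Type*} {A1 : V1 → V1 → Prop} {A2 : V2 → V2 → Prop}
  {u1 v1 : V1} {v2 u2 : V2}

theorem hajosJoin_inl {a b : V1} (hab : withoutArc A1 u1 v1 a b) :
    hajosJoin A1 A2 u1 v1 v2 u2 (inl v2 a) (inl v2 b) :=
  Or.inl ⟨a, b, rfl, rfl, hab⟩

variable [DecidableEq V2]

theorem hajosJoin_inr {a b : V2} (hne : a ≠ b) (hab : withoutArc A2 v2 u2 a b) :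
    hajosJoin A1 A2 u1 v1 v2 u2 (inr v1 v2 a) (inr v1 v2 b) := by
  obtain ⟨hA, hvu⟩ := hab
  by_cases ha : a = v2
  · subst ha
    exact Or.inr (Or.inr (Or.inl ⟨b, by simp [inl], val_inr_of_ne hne.symm, hA,
      fun hb => hvu ⟨rfl, hb⟩⟩))
  by_cases hb : b = v2
  · subst hb
    exact Or.inr (Or.inr (Or.inr (Or.inl ⟨a, val_inr_of_ne ha, by simp [inl], hA⟩)))
  · exact Or.inr (Or.inl ⟨a, b, val_inr_of_ne ha, val_inr_of_ne hb, hA⟩)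

theorem hajosJoin_inl_inr (hu2 : u2 ≠ v2) :
    hajosJoin A1 A2 u1 v1 v2 u2 (inl v2 u1) (inr v1 v2 u2) :=
  Or.inr (Or.inr (Or.inr (Or.inr ⟨rfl, val_inr_of_ne hu2⟩)))

theorem IsAcyclicColoring.of_hajosJoin {j : ℕ} {c : HajosVerts V1 V2 v2 → Fin j}
    (hc : IsAcyclicColoring (hajosJoin A1 A2 u1 v1 v2 u2) c) :
    IsAcyclicColoring A1 (c ∘ inl v2) ∨ IsAcyclicColoring A2 (c ∘ inr v1 v2) := by
  simp only [isAcyclicColoring_iff] at hc ⊢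
  by_contra! ⟨⟨i1, x1, h1⟩, ⟨i2, x2, h2⟩⟩
  have hom1 : ∀ i a b, withoutArc (arcWithin A1 {x | c (inl v2 x) = i}) u1 v1 a b →
      arcWithin (hajosJoin A1 A2 u1 v1 v2 u2) {y | c y = i} (inl v2 a) (inl v2 b) :=
    fun i a b ⟨⟨ha, hb, hab, hA⟩, hnot⟩ =>
      ⟨ha, hb, inl_injective.ne hab, hajosJoin_inl ⟨hA, hnot⟩⟩
  have hom2 : ∀ i a b, withoutArc (arcWithin A2 {x | c (inr v1 v2 x) = i}) v2 u2 a b →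
      arcWithin (hajosJoin A1 A2 u1 v1 v2 u2) {y | c y = i} (inr v1 v2 a) (inr v1 v2 b) :=
    fun i a b ⟨⟨ha, hb, hab, hA⟩, hnot⟩ =>
      ⟨ha, hb, inr_injective.ne hab, hajosJoin_inr hab ⟨hA, hnot⟩⟩
  rcases h1.withoutArc_or (p := u1) (q := v1) with h1 | ⟨⟨hu1, hv1, -, -⟩, P⟩
  · exact hc i1 _ (h1.lift _ (hom1 i1))
  rcases h2.withoutArc_or (p := v2) (q := u2) with h2 | ⟨⟨hv2, hu2, hvu2, -⟩, Q⟩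
  · exact hc i2 _ (h2.lift _ (hom2 i2))
  obtain rfl : i2 = i1 := by
    rw [← show c (inr v1 v2 v2) = i2 from hv2, ← show c (inl v2 v1) = i1 from hv1, inr_self]
  have hu1u2 : arcWithin (hajosJoin A1 A2 u1 v1 v2 u2) {y | c y = i2} (inl v2 u1) (inr v1 v2 u2) :=
    ⟨hu1, hu2, inl_ne_inr u1 hvu2.symm, hajosJoin_inl_inr hvu2.symm⟩
  have hQ : ReflTransGen _ (inr v1 v2 u2) (inr v1 v2 v2) := Q.lift _ (hom2 i2)
  rw [inr_self] at hQ
  exact hc i2 _ ((TransGen.tail' (P.lift _ (hom1 i2)) hu1u2).trans_left hQ)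

end HajosJoin

section Identify

variable {V : Type*} {A : V → V → Prop} {I : Set V} [DecidablePred (· ∈ I)]

def identifyMap (I : Set V) [DecidablePred (· ∈ I)] (x : V) : Option {x : V // x ∉ I} :=
  if h : x ∈ I then none else some ⟨x, h⟩

theorem IsAcyclicColoring.comap_identifyMap {j : ℕ} {c : Option {x : V // x ∉ I} → Fin j}
    (hc : IsAcyclicColoring (identifyAdj A I) c)
    (hind : ∀ u ∈ I, ∀ v ∈ I, u ≠ v → ¬ A u v) :
    IsAcyclicColoring A (c ∘ identifyMap I) := by
  refine hc.comap _ fun a b hab hA => ?_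
  by_cases ha : a ∈ I <;> by_cases hb : b ∈ I
  · exact absurd hA (hind a ha b hb hab)
  · simp only [identifyMap, dif_pos ha, dif_neg hb]
    exact ⟨nofun, a, ha, hA⟩
  · simp only [identifyMap, dif_neg ha, dif_pos hb]
    exact ⟨nofun, b, hb, hA⟩
  · simp only [identifyMap, dif_neg ha, dif_neg hb]
    exact ⟨fun h => hab (congrArg Subtype.val (Option.some_injective _ h)), hA⟩

end Identify

theorem HajosConstructible.le_of_isAcyclicColoring {k n : ℕ} {A : Fin n → Fin n → Prop}
    (h : HajosConstructible k n A) {j : ℕ} {c : Fin n → Fin j} (hc : IsAcyclicColoring A c) :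
    k ≤ j := by
  induction h generalizing j with
  | base => simpa using Fintype.card_le_of_injective c hc.injective_of_complete
  | join _ _ _ _ e he ih1 ih2 =>
    rcases (hc.comap_equiv e he).of_hajosJoin with h1 | h2
    · exact ih1 h1
    · exact ih2 h2
  | ident _ _ hind e he ih =>
    classical
    exact ih ((hc.comap_equiv e he).comap_identifyMap hind)

/-- Every Hajós-`k`-constructible digraph has dichromatic number at least `k`. -/
theorem hajosConstructible_dichromatic_ge (k n : ℕ) (A : Fin n → Fin n → Prop)
    (h : HajosConstructible k n A) : k ≤ dichromatic A := by
  obtain ⟨c, hc⟩ : ∃ c : Fin n → Fin (dichromatic A), IsAcyclicColoring A c :=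
    Nat.sInf_mem (s := {j | ∃ c : Fin n → Fin j, IsAcyclicColoring A c})
      ⟨n, id, isAcyclicColoring_of_injective Function.injective_id⟩
  exact h.le_of_isAcyclicColoring hc
end

section
/- The explicit digraph D3 on vertices v0,...,v4 with digons v0v1, v0v4, v1v2, v2v3, v3v4 (i.e., the symmetric 5-cycle) is obtainable from D(K3) by a sequence of directed Hajós joins and identifications of independent vertices; in particular, D(C5) is Hajós-3-constructible. -/
/-!
`D(K₃) ▽ D(K₃)` is `D(C₅)` up to three defects: one arc of a digon is missing and two chords
are present, forming a directed triangle. Joining two copies of such a digraph along a chord of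
each and folding the second copy onto the first by a rotation of `C₅` removes one defect, since
the arc added by the join is sent onto an arc of `D(C₅)`; three such steps reach `D(C₅)`. A fold
is a surjective map with loopless image, realised by identifying one independent pair of
vertices at a time.
-/

open Function

def IsHajosConstructible (k : ℕ) {V : Type*} (A : V → V → Prop) : Prop :=
  ∃ n, ∃ e : Fin n ≃ V, HajosConstructible k n (A on e)

namespace HajosConstructible

variable {k n : ℕ}

theorem irrefl {A : Fin n → Fin n → Prop} (h : HajosConstructible k n A) (a : Fin n) :
    ¬ A a a := by
  induction h with
  | base => exact fun h => h rfl
  | join _ _ _ _ e he ih₁ ih₂ =>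
    rw [← e.apply_symm_apply a, ← he]
    rintro (⟨a, b, hx, hy, hab, -⟩ | ⟨a, b, hx, hy, hab⟩ | ⟨b, hx, hy, -⟩ | ⟨b, hx, hy, -⟩ |
      ⟨hx, hy⟩)
    · exact ih₁ a (Sum.inl_injective (hx.symm.trans hy) ▸ hab)
    · exact ih₂ a (Sum.inr_injective (hx.symm.trans hy) ▸ hab)
    all_goals simp_all
  | ident _ _ _ e he ih =>
    rw [← e.apply_symm_apply a, ← he]
    rcases e.symm a with _ | a
    · exact id
    · exact ih a.1

/-- Identifying a single vertex is a relabelling. -/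
theorem of_equiv {m : ℕ} {A : Fin n → Fin n → Prop} {B : Fin m → Fin m → Prop}
    (h : HajosConstructible k n A) (e : Fin n ≃ Fin m) (hB : ∀ a b, A a b ↔ B (e a) (e b)) :
    HajosConstructible k m B := by
  rcases n with _ | n
  · obtain rfl : m = 0 := by simpa using (Fintype.card_congr e).symm
    convert h using 2
  · refine h.ident (I := {0}) ⟨0, rfl⟩ (fun u hu v hv huv => absurd (hu.trans hv.symm) huv)
      ((Equiv.optionSubtypeNe 0).trans e) ?_
    rintro (_ | ⟨a, ha⟩) (_ | ⟨b, hb⟩)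
    · exact iff_of_false id ((hB 0 0).not.mp (h.irrefl 0))
    all_goals
      simp only [identifyAdj, Set.mem_singleton_iff, exists_eq_left]
      exact hB _ _

end HajosConstructible

theorem isHajosConstructible_iff {k n : ℕ} {A : Fin n → Fin n → Prop} :
    IsHajosConstructible k A ↔ HajosConstructible k n A :=
  ⟨fun ⟨_, e, h⟩ => h.of_equiv e fun _ _ => Iff.rfl, fun h => ⟨n, Equiv.refl _, h⟩⟩

section Quotient

variable {k : ℕ} {V W : Type*}

theorem relationMap_identifyAdj {A : V → V → Prop} {I : Set V} {f : V → W} {c : W}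
    (hI : ∀ u ∈ I, f u = c) (hind : ∀ u ∈ I, ∀ v ∈ I, ¬ A u v) :
    Relation.Map (identifyAdj A I) (fun o => o.elim c (f ∘ Subtype.val))
      (fun o => o.elim c (f ∘ Subtype.val)) = Relation.Map A f f := by
  ext x y
  constructor
  · rintro ⟨_ | a, _ | b, hab, rfl, rfl⟩
    · exact hab.elim
    · obtain ⟨u, hu, hub⟩ := hab
      exact ⟨u, b, hub, hI u hu, rfl⟩
    · obtain ⟨u, hu, hau⟩ := hab
      exact ⟨a, u, hau, rfl, hI u hu⟩
    · exact ⟨a, b, hab, rfl, rfl⟩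
  · rintro ⟨a, b, hab, rfl, rfl⟩
    by_cases ha : a ∈ I <;> by_cases hb : b ∈ I
    · exact absurd hab (hind a ha b hb)
    · exact ⟨none, some ⟨b, hb⟩, ⟨a, ha, hab⟩, (hI a ha).symm, rfl⟩
    · exact ⟨some ⟨a, ha⟩, none, ⟨b, hb, hab⟩, rfl, (hI b hb).symm⟩
    · exact ⟨some ⟨a, ha⟩, some ⟨b, hb⟩, hab, rfl, rfl⟩

/-- Identifying one pair `{a, b}` with `f a = f b` at a time realises the whole quotient; the
image being loopless is exactly what makes every fibre independent. -/
theorem HajosConstructible.isHajosConstructible_map {n : ℕ} {A : Fin n → Fin n → Prop}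
    (h : HajosConstructible k n A) {f : Fin n → W} (hf : Surjective f)
    (hloop : ∀ w, ¬ Relation.Map A f f w w) : IsHajosConstructible k (Relation.Map A f f) := by
  induction n using Nat.strong_induction_on with
  | _ n ih =>
  by_cases hinj : Injective f
  · refine ⟨n, .ofBijective f ⟨hinj, hf⟩, ?_⟩
    change HajosConstructible k n (Relation.Map A f f on f)
    rwa [Relation.onFun_map_eq_of_injective hinj]
  obtain ⟨a, b, hab, hne⟩ : ∃ a b, f a = f b ∧ a ≠ b := by
    simpa [Injective] using hinj
  set I : Set (Fin n) := {a, b}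
  have hI : ∀ u ∈ I, f u = f a := by
    rintro u (rfl | rfl)
    exacts [rfl, hab.symm]
  have hind : ∀ u ∈ I, ∀ v ∈ I, ¬ A u v := fun u hu v hv huv =>
    hloop (f a) ⟨u, v, huv, hI u hu, hI v hv⟩
  let g : Option {x // x ∉ I} → W := fun o => o.elim (f a) (f ∘ Subtype.val)
  let e := Finite.equivFin (Option {x // x ∉ I})
  have hcard : Nat.card (Option {x // x ∉ I}) < n := by
    have hsplit := Set.ncard_add_ncard_compl I
    rw [Set.ncard_pair hne, Nat.card_eq_fintype_card, Fintype.card_fin] at hsplit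
    rw [Finite.card_option, show Nat.card {x // x ∉ I} = Iᶜ.ncard from Nat.card_coe_set_eq Iᶜ]
    omega
  have hident : HajosConstructible k _ (Relation.Map (identifyAdj A I) e e) :=
    h.ident ⟨a, by simp [I]⟩ (fun u hu v hv _ => hind u hu v hv) e
      fun x y => (Relation.map_apply_apply e.injective e.injective _ x y).symm
  have hmap : Relation.Map (Relation.Map (identifyAdj A I) e e) (g ∘ e.symm) (g ∘ e.symm) =
      Relation.Map A f f := by
    rw [Relation.map_map, comp_assoc, e.symm_comp_self, comp_id]
    exact relationMap_identifyAdj hI hind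
  have hg : Surjective g := by
    intro w
    obtain ⟨x, rfl⟩ := hf w
    by_cases hx : x ∈ I
    exacts [⟨none, (hI x hx).symm⟩, ⟨some ⟨x, hx⟩, rfl⟩]
  rw [← hmap] at hloop ⊢
  exact ih _ hcard hident (hg.comp e.symm.surjective) hloop

theorem IsHajosConstructible.map {A : V → V → Prop} (h : IsHajosConstructible k A) {f : V → W}
    (hf : Surjective f) (hloop : ∀ w, ¬ Relation.Map A f f w w) :
    IsHajosConstructible k (Relation.Map A f f) := by
  obtain ⟨n, e, h⟩ := h
  have hA : Relation.Map (A on e) (f ∘ e) (f ∘ e) = Relation.Map A f f := by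
    rw [← Relation.map_map, Relation.map_onFun_eq_of_surjective e.surjective]
  rw [← hA] at hloop ⊢
  exact h.isHajosConstructible_map (hf.comp e.surjective) hloop

end Quotient

instance {V₁ V₂ : Type*} [Fintype V₁] [Fintype V₂] [DecidableEq V₁] [DecidableEq V₂] {v₂ : V₂} :
    Fintype (HajosVerts V₁ V₂ v₂) :=
  inferInstanceAs (Fintype {x : V₁ ⊕ V₂ // x ≠ Sum.inr v₂})

instance {V₁ V₂ : Type*} [DecidableEq V₁] [DecidableEq V₂] {v₂ : V₂} :
    DecidableEq (HajosVerts V₁ V₂ v₂) :=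
  inferInstanceAs (DecidableEq {x : V₁ ⊕ V₂ // x ≠ Sum.inr v₂})

instance {V₁ V₂ : Type*} [Fintype V₁] [Fintype V₂] [DecidableEq V₁] [DecidableEq V₂]
    {A₁ : V₁ → V₁ → Prop} {A₂ : V₂ → V₂ → Prop} [DecidableRel A₁] [DecidableRel A₂]
    {u₁ v₁ : V₁} {v₂ u₂ : V₂} : DecidableRel (hajosJoin A₁ A₂ u₁ v₁ v₂ u₂) := fun x y => by
  dsimp only [hajosJoin]
  infer_instance

namespace HajosConstructible

variable {k n₁ n₂ m : ℕ} {A₁ : Fin n₁ → Fin n₁ → Prop} {A₂ : Fin n₂ → Fin n₂ → Prop}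
  {u₁ v₁ : Fin n₁} {v₂ u₂ : Fin n₂}

theorem isHajosConstructible_hajosJoin (h₁ : HajosConstructible k n₁ A₁)
    (h₂ : HajosConstructible k n₂ A₂) (ha₁ : A₁ u₁ v₁) (ha₂ : A₂ v₂ u₂) :
    IsHajosConstructible k (hajosJoin A₁ A₂ u₁ v₁ v₂ u₂) :=
  let e := Fintype.equivFin (HajosVerts (Fin n₁) (Fin n₂) v₂)
  ⟨_, e.symm, h₁.join h₂ ha₁ ha₂ e fun x y => by simp [onFun]⟩

theorem of_map_hajosJoin {B : Fin m → Fin m → Prop} (h₁ : HajosConstructible k n₁ A₁)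
    (h₂ : HajosConstructible k n₂ A₂) (ha₁ : A₁ u₁ v₁) (ha₂ : A₂ v₂ u₂)
    (f : HajosVerts (Fin n₁) (Fin n₂) v₂ → Fin m) (hf : Surjective f)
    (hB : ∀ x y, Relation.Map (hajosJoin A₁ A₂ u₁ v₁ v₂ u₂) f f x y ↔ B x y)
    (hB_irrefl : ∀ x, ¬ B x x) : HajosConstructible k m B := by
  obtain rfl : Relation.Map (hajosJoin A₁ A₂ u₁ v₁ v₂ u₂) f f = B := by
    ext x y
    exact hB x y
  exact isHajosConstructible_iff.mp
    ((h₁.isHajosConstructible_hajosJoin h₂ ha₁ ha₂).map hf hB_irrefl)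

end HajosConstructible

def bidirectedC5 (u v : Fin 5) : Prop :=
  v.val = (u.val + 1) % 5 ∨ u.val = (v.val + 1) % 5

instance : DecidableRel bidirectedC5 := fun u v => by
  dsimp only [bidirectedC5]
  infer_instance

def bidirectedC5WithArcs (l : List (Fin 5 × Fin 5)) (u v : Fin 5) : Prop :=
  bidirectedC5 u v ∨ (u, v) ∈ l

instance (l : List (Fin 5 × Fin 5)) : DecidableRel (bidirectedC5WithArcs l) := fun u v => by
  dsimp only [bidirectedC5WithArcs]
  infer_instance

/-- `D(K₃) ▽ D(K₃)`: the digon `{3, 4}` of `D(C₅)` becomes the directed triangle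
`3 → 4 → 1 → 3`. -/
def k3JoinK3 (u v : Fin 5) : Prop :=
  (bidirectedC5 u v ∧ (u, v) ≠ (4, 3)) ∨ (u, v) = (1, 3) ∨ (u, v) = (4, 1)

instance : DecidableRel k3JoinK3 := fun u v => by
  dsimp only [k3JoinK3]
  infer_instance

def foldByRotation {v₂ : Fin 5} (c : Fin 5) (x : HajosVerts (Fin 5) (Fin 5) v₂) : Fin 5 :=
  x.1.elim id (· + c)

theorem hajosConstructible_k3JoinK3 : HajosConstructible 3 5 k3JoinK3 :=
  .of_map_hajosJoin (u₁ := 0) (v₁ := 1) (v₂ := 0) (u₂ := 1) .base .base (by decide) (by decide)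
    (fun x => x.1.elim ![3, 1, 2] ![1, 4, 0]) (by decide) (by decide) (by decide)

theorem hajosConstructible_bidirectedC5WithArcs_pair :
    HajosConstructible 3 5 (bidirectedC5WithArcs [(0, 2), (4, 1)]) :=
  .of_map_hajosJoin (u₁ := 1) (v₁ := 3) (v₂ := 4) (u₂ := 1) hajosConstructible_k3JoinK3
    hajosConstructible_k3JoinK3 (by decide) (by decide) (foldByRotation 4) (by decide)
    (by decide) (by decide)

theorem hajosConstructible_bidirectedC5WithArcs_single :
    HajosConstructible 3 5 (bidirectedC5WithArcs [(0, 2)]) :=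
  .of_map_hajosJoin (u₁ := 4) (v₁ := 1) (v₂ := 0) (u₂ := 2)
    hajosConstructible_bidirectedC5WithArcs_pair hajosConstructible_bidirectedC5WithArcs_pair
    (by decide) (by decide) (foldByRotation 1) (by decide) (by decide) (by decide)

/-- The symmetric 5-cycle `D(C5)` (digons `v0v1, v1v2, v2v3, v3v4, v4v0`)
is Hajós-3-constructible. -/
theorem C5_hajos_three_constructible :
    HajosConstructible 3 5
      (fun u v : Fin 5 => (v.val = (u.val + 1) % 5) ∨ (u.val = (v.val + 1) % 5)) :=
  .of_map_hajosJoin (u₁ := 0) (v₁ := 2) (v₂ := 0) (u₂ := 2)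
    hajosConstructible_bidirectedC5WithArcs_single hajosConstructible_bidirectedC5WithArcs_single
    (by decide) (by decide) (foldByRotation 2) (by decide) (by decide) (by decide)
end
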